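/- arXiv:1608.05612 — 2 statements merged into one kernel-verified Lean document; each statement's English description precedes it below -/
import Mathlib

section
/- Let S = [0,1]² with a product of two atomless Borel probability measures, and A = B = {(x₁,x₂) : x₁ ≠ x₂}. Then A □ B = ∅ while A ⎕₁₁ B = [0,1]². -/
open MeasureTheory
open scoped ENNReal

/-- The cylinder `[x]_K`. -/
def cyl {n : ℕ} {S : Fin n → Type*} (x : ∀ i, S i) (K : Finset (Fin n)) :
    Set (∀ i, S i) :=
  {y | ∀ i ∈ K, y i = x i}

/-- The BKR box `A □ B`. -/
def box {n : ℕ} {S : Fin n → Type*} (A B : Set (∀ i, S i)) : Set (∀ i, S i) :=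
  {x | ∃ K L : Finset (Fin n), Disjoint K L ∧ cyl x K ⊆ A ∧ cyl x L ⊆ B}

/-- `⟨x_K, v⟩_K`: the point agreeing with `x` on `K` and with `v` on `Kᶜ`. -/
def glue {n : ℕ} {S : Fin n → Type*} (K : Finset (Fin n)) (x : ∀ i, S i)
    (v : ∀ i : {i : Fin n // i ∉ K}, S i.1) : ∀ i, S i :=
  fun i => if h : i ∈ K then x i else v ⟨i, h⟩

/-- `P_{Kᶜ}({v : ⟨x_K, v⟩_K ∈ E})`, a version of the conditional probability of `E`
given the coordinates of `x` in `K`. -/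
noncomputable def condProb {n : ℕ} {S : Fin n → Type*} [∀ i, MeasurableSpace (S i)]
    (P : ∀ i, Measure (S i)) [∀ i, IsProbabilityMeasure (P i)]
    (E : Set (∀ i, S i)) (K : Finset (Fin n)) (x : ∀ i, S i) : ℝ≥0∞ :=
  Measure.pi (fun i : {i : Fin n // i ∉ K} => P i.1) {v | glue K x v ∈ E}

/-- The off-diagonal set `{(x₁,x₂) : x₁ ≠ x₂}` in `[0,1]²`. -/
def offDiag : Set (∀ _ : Fin 2, unitInterval) := {x | x 0 ≠ x 1}

lemma cyl_eq_univ {x : ∀ _ : Fin 2, unitInterval} {K : Finset (Fin 2)}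
    (h : cyl x K ⊆ offDiag) : K = Finset.univ := by
  have h0 : (0 : Fin 2) ∈ K := by
    by_contra h0
    have hy : Function.update x 0 (x 1) ∈ cyl x K := by
      intro i hi
      exact Function.update_of_ne (by rintro rfl; exact h0 hi) _ _
    have := h hy
    simp [offDiag, Function.update_of_ne, Function.update_self] at this
  have h1 : (1 : Fin 2) ∈ K := by
    by_contra h1
    have hy : Function.update x 1 (x 0) ∈ cyl x K := by
      intro i hi
      exact Function.update_of_ne (by rintro rfl; exact h1 hi) _ _
    have := h hy
    simp [offDiag, Function.update_of_ne, Function.update_self] at this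
  apply Finset.eq_univ_iff_forall.mpr
  intro i
  fin_cases i <;> assumption

lemma measure_ne_eq_one {ι : Type*} [Fintype ι] {T : ι → Type*}
    [∀ i, MeasurableSpace (T i)] (Q : ∀ i, Measure (T i)) [∀ i, IsProbabilityMeasure (Q i)]
    [∀ i, NullSingletonClass (Q i)] (k : ι) [MeasurableSingletonClass (T k)] (c : T k) :
    Measure.pi Q {v | v k ≠ c} = 1 := by
  have hnull : Measure.pi Q {v | v k = c} = 0 := Measure.pi_hyperplane _ k c
  have hmeas : MeasurableSet {v : ∀ i, T i | v k = c} :=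
    (measurable_pi_apply k) (measurableSet_singleton c)
  have : {v : ∀ i, T i | v k ≠ c} = {v | v k = c}ᶜ := rfl
  rw [this, measure_compl hmeas (by simp [hnull]), hnull, measure_univ, tsub_zero]

lemma cp0 (P : Fin 2 → Measure unitInterval) [∀ i, IsProbabilityMeasure (P i)]
    [∀ i, NullSingletonClass (P i)] (x : ∀ _ : Fin 2, unitInterval) :
    condProb P offDiag {0} x = 1 := by
  unfold condProb
  have hk : (1 : Fin 2) ∉ ({0} : Finset (Fin 2)) := by decide
  have hset : {v : ∀ i : {i : Fin 2 // i ∉ ({0} : Finset (Fin 2))}, unitInterval |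
      glue {0} x v ∈ offDiag} = {v | v ⟨1, hk⟩ ≠ x 0} := by
    ext v
    simp only [Set.mem_setOf_eq, offDiag, glue]
    rw [dif_pos (by decide), dif_neg hk]
    exact ne_comm
  rw [hset]
  exact measure_ne_eq_one _ _ _

lemma cp1 (P : Fin 2 → Measure unitInterval) [∀ i, IsProbabilityMeasure (P i)]
    [∀ i, NullSingletonClass (P i)] (x : ∀ _ : Fin 2, unitInterval) :
    condProb P offDiag {1} x = 1 := by
  unfold condProb
  have hk : (0 : Fin 2) ∉ ({1} : Finset (Fin 2)) := by decide
  have hset : {v : ∀ i : {i : Fin 2 // i ∉ ({1} : Finset (Fin 2))}, unitInterval |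
      glue {1} x v ∈ offDiag} = {v | v ⟨0, hk⟩ ≠ x 1} := by
    ext v
    simp only [Set.mem_setOf_eq, offDiag, glue]
    rw [dif_neg hk, dif_pos (by decide)]
  rw [hset]
  exact measure_ne_eq_one _ _ _

theorem stmt13 (P : Fin 2 → Measure unitInterval) [∀ i, IsProbabilityMeasure (P i)]
    [∀ i, NullSingletonClass (P i)] :
    box offDiag offDiag = ∅ ∧
    {x | ∃ K L : Finset (Fin 2), Disjoint K L ∧
        condProb P offDiag K x = 1 ∧ condProb P offDiag L x = 1} = Set.univ := by
  constructor
  · ext x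
    simp only [box, Set.mem_setOf_eq, Set.mem_empty_iff_false, iff_false]
    rintro ⟨K, L, hKL, hA, hB⟩
    rw [cyl_eq_univ hA, cyl_eq_univ hB] at hKL
    exact absurd (hKL (le_refl _) (le_refl _) (Finset.mem_univ 0)) (by simp)
  · apply Set.eq_univ_iff_forall.mpr
    intro x
    exact ⟨{0}, {1}, by simp, cp0 P x,
      cp1 P x⟩
end

section
/- Odd coin tossing: with n = 2m+1 independent fair coin tosses, A = {first m+1 tosses are heads}, B = {last m+1 tosses are tails}, and s = t = 1/2, the lenient box satisfies P(A ⎕ₛₜ B) = (m+1)·2^{−2m}, while P(A_{1/2}) = (m+2)·2^{−(m+1)}, so P(A ⎕ₛₜ B) ≤ P(A_{1/2})·P(B_{1/2}). -/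
open MeasureTheory
open scoped ENNReal

/-- The set `E_{r,K}`: outcomes `x` for which the conditional probability of `E` given the
coordinates of `x` in `K` is at least `r`. (For `K = [n]` the conditional probability is the
indicator of `E`, recovering the convention `E_{r,[n]} = E` for `r > 0` and `= S` for `r = 0`.) -/
noncomputable def lenSet {n : ℕ} {S : Fin n → Type*} [∀ i, MeasurableSpace (S i)]
    (P : ∀ i, Measure (S i)) [∀ i, IsProbabilityMeasure (P i)]
    (E : Set (∀ i, S i)) (r : ℝ≥0∞) (K : Finset (Fin n)) : Set (∀ i, S i) :=
  {x | r ≤ condProb P E K x}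

/-- The lenient box `A ⎕ₛₜ B = ⋃_{K ∩ L = ∅} A_{s,K} ∩ B_{t,L}`. -/
noncomputable def stbox {n : ℕ} {S : Fin n → Type*} [∀ i, MeasurableSpace (S i)]
    (P : ∀ i, Measure (S i)) [∀ i, IsProbabilityMeasure (P i)]
    (A B : Set (∀ i, S i)) (s t : ℝ≥0∞) : Set (∀ i, S i) :=
  {x | ∃ K L : Finset (Fin n), Disjoint K L ∧
    x ∈ lenSet P A s K ∧ x ∈ lenSet P B t L}

/-- The `r`-inflated set `E_r = ⋃_{K ⊆ [n]} E_{r,K}`. -/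
noncomputable def infl {n : ℕ} {S : Fin n → Type*} [∀ i, MeasurableSpace (S i)]
    (P : ∀ i, Measure (S i)) [∀ i, IsProbabilityMeasure (P i)]
    (E : Set (∀ i, S i)) (r : ℝ≥0∞) : Set (∀ i, S i) :=
  ⋃ K : Finset (Fin n), lenSet P E r K

/-- The event that the first `m+1` of `2m+1` tosses are heads (`true`). -/
def headsA (m : ℕ) : Set (Fin (2 * m + 1) → Bool) :=
  {x | ∀ i : Fin (2 * m + 1), (i : ℕ) ≤ m → x i = true}

/-- The event that the last `m+1` of `2m+1` tosses are tails (`false`). -/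
def tailsB (m : ℕ) : Set (Fin (2 * m + 1) → Bool) :=
  {x | ∀ i : Fin (2 * m + 1), m ≤ (i : ℕ) → x i = false}

section Aux

variable {n : ℕ} (P : Fin n → Measure Bool) [∀ i, IsProbabilityMeasure (P i)]

lemma meas_all {α : Type*} [Countable α] [MeasurableSpace α] [MeasurableSingletonClass α]
    (s : Set α) : MeasurableSet s :=
  s.to_countable.measurableSet

/-- cylinder with pattern -/
def Cyl (I : Finset (Fin n)) (f : Fin n → Bool) : Set (Fin n → Bool) :=
  {x | ∀ i ∈ I, x i = f i}

lemma measure_cyl (hP : ∀ i b, P i {b} = 1 / 2) (I : Finset (Fin n)) (f : Fin n → Bool) :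
    Measure.pi P (Cyl I f) = (1/2 : ℝ≥0∞) ^ I.card := by
  have hs : Cyl I f
      = Set.pi Set.univ (fun i => if i ∈ I then ({f i} : Set Bool) else Set.univ) := by
    ext x
    simp only [Cyl, Set.mem_setOf_eq, Set.mem_pi, Set.mem_univ, forall_true_left]
    constructor
    · intro h i
      split_ifs with hi
      · simpa using h i hi
      · trivial
    · intro h i hi
      have := h i
      rw [if_pos hi] at this
      simpa using this
  rw [hs, Measure.pi_pi]
  have h2 : ∀ i, P i (if i ∈ I then ({f i} : Set Bool) else Set.univ)
      = if i ∈ I then (1/2 : ℝ≥0∞) else 1 := by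
    intro i; split_ifs with hi
    · exact hP i (f i)
    · exact measure_univ
  simp_rw [h2]
  rw [Finset.prod_ite, Finset.prod_const, Finset.prod_const_one, mul_one]
  congr 1
  rw [Finset.filter_mem_eq_inter, Finset.univ_inter]

lemma measure_iUnion_cyl (hP : ∀ i b, P i {b} = 1 / 2) {ι : Type} [Fintype ι] (I : Finset (Fin n)) (pat : ι → Fin n → Bool)
    (hinj : ∀ a b : ι, (∀ i ∈ I, pat a i = pat b i) → a = b) :
    Measure.pi P (⋃ a : ι, Cyl I (pat a)) = (Fintype.card ι : ℝ≥0∞) * (1/2) ^ I.card := by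
  rw [measure_iUnion ?_ (fun a => meas_all _)]
  · simp_rw [measure_cyl P hP]
    rw [tsum_fintype]
    simp [Finset.sum_const, nsmul_eq_mul, Finset.card_univ]
  · intro a b hab
    refine Set.disjoint_left.mpr fun x hxa hxb => hab ?_
    exact hinj a b fun i hi => (hxa i hi).symm.trans (hxb i hi)

lemma condProb_eq (hP : ∀ i b, P i {b} = 1 / 2) (I : Finset (Fin n)) (b : Bool) (K : Finset (Fin n)) (x : Fin n → Bool) :
    condProb P {y | ∀ i ∈ I, y i = b} K x =
      if ∀ i ∈ K ∩ I, x i = b then (1/2 : ℝ≥0∞) ^ ((I \ K).card) else 0 := by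
  unfold condProb
  split_ifs with h
  · have hset : {v : ∀ _ : {i : Fin n // i ∉ K}, Bool | glue K x v ∈ {y | ∀ i ∈ I, y i = b}}
        = Set.pi Set.univ (fun i : {i : Fin n // i ∉ K} =>
            if (i : Fin n) ∈ I then ({b} : Set Bool) else Set.univ) := by
      ext v
      simp only [Set.mem_setOf_eq, Set.mem_pi, Set.mem_univ, forall_true_left, glue]
      constructor
      · intro hv i
        split_ifs with hi
        · have := hv i.1 hi
          rw [dif_neg i.2] at this
          simpa using this
        · trivial
      · intro hv i hi
        by_cases hK : i ∈ K
        · rw [dif_pos hK]; exact h i (Finset.mem_inter.mpr ⟨hK, hi⟩)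
        · rw [dif_neg hK]
          have := hv ⟨i, hK⟩
          rw [if_pos hi] at this
          simpa using this
    rw [hset, Measure.pi_pi]
    have h2 : ∀ i : {i : Fin n // i ∉ K},
        P i.1 (if (i : Fin n) ∈ I then ({b} : Set Bool) else Set.univ)
          = if (i : Fin n) ∈ I then (1/2 : ℝ≥0∞) else 1 := fun i => by
      split_ifs with hi
      · exact hP i.1 b
      · exact measure_univ
    simp_rw [h2]
    rw [Finset.prod_ite, Finset.prod_const, Finset.prod_const_one, mul_one]
    congr 1
    refine Finset.card_bij (fun i _ => (i : Fin n)) ?_ ?_ ?_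
    · intro a ha
      simp only [Finset.mem_filter] at ha
      exact Finset.mem_sdiff.mpr ⟨ha.2, a.2⟩
    · intro a₁ _ a₂ _ hab; exact Subtype.ext hab
    · intro j hj
      rcases Finset.mem_sdiff.mp hj with ⟨hjI, hjK⟩
      exact ⟨⟨j, hjK⟩, by simp [hjI], rfl⟩
  · push_neg at h
    obtain ⟨i₀, hi₀, hxi₀⟩ := h
    have hempty : {v : ∀ _ : {i : Fin n // i ∉ K}, Bool
        | glue K x v ∈ {y | ∀ i ∈ I, y i = b}} = ∅ := by
      ext v
      simp only [Set.mem_setOf_eq, Set.mem_empty_iff_false, iff_false]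
      intro hv
      have := hv i₀ (Finset.mem_inter.mp hi₀).2
      rw [glue, dif_pos (Finset.mem_inter.mp hi₀).1] at this
      exact hxi₀ this
    rw [hempty, measure_empty]

lemma half_le_half_pow {k : ℕ} : (1/2 : ℝ≥0∞) ≤ (1/2) ^ k ↔ k ≤ 1 := by
  rw [one_div, ← ENNReal.inv_pow, ENNReal.inv_le_inv]
  have : ((2 : ℝ≥0∞)) = ((2 : ℕ) : ℝ≥0∞) := by norm_num
  rw [this, ← Nat.cast_pow, Nat.cast_le]
  constructor
  · intro h
    by_contra hk
    push_neg at hk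
    have : 2 ^ 2 ≤ 2 ^ k := Nat.pow_le_pow_right (by norm_num) hk
    omega
  · intro h
    calc (2:ℕ) ^ k ≤ 2 ^ 1 := Nat.pow_le_pow_right (by norm_num) h
    _ = 2 := rfl

lemma mem_lenSet_iff (hP : ∀ i b, P i {b} = 1 / 2) (I : Finset (Fin n)) (b : Bool)
    (K : Finset (Fin n)) (x : Fin n → Bool) :
    x ∈ lenSet P {y | ∀ i ∈ I, y i = b} (1/2) K
      ↔ (∀ i ∈ K ∩ I, x i = b) ∧ (I \ K).card ≤ 1 := by
  show (1/2 : ℝ≥0∞) ≤ condProb P _ K x ↔ _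
  rw [condProb_eq P hP]
  split_ifs with h
  · rw [half_le_half_pow]
    exact ⟨fun hk => ⟨h, hk⟩, fun hk => hk.2⟩
  · constructor
    · intro h12
      rw [nonpos_iff_eq_zero] at h12
      norm_num at h12
    · intro hc
      exact absurd hc.1 h

lemma mem_infl_iff (hP : ∀ i b, P i {b} = 1 / 2) (I : Finset (Fin n)) (b : Bool)
    (x : Fin n → Bool) :
    x ∈ infl P {y | ∀ i ∈ I, y i = b} (1/2)
      ↔ (I.filter fun i => x i ≠ b).card ≤ 1 := by
  constructor
  · intro hx
    obtain ⟨_, ⟨K, rfl⟩, hK⟩ := hx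
    rw [mem_lenSet_iff P hP] at hK
    refine le_trans (Finset.card_le_card ?_) hK.2
    intro i hi
    simp only [Finset.mem_filter] at hi
    refine Finset.mem_sdiff.mpr ⟨hi.1, fun hiK => ?_⟩
    exact hi.2 (hK.1 i (Finset.mem_inter.mpr ⟨hiK, hi.1⟩))
  · intro hx
    refine Set.mem_iUnion.mpr ⟨Finset.univ.filter (fun i => x i = b), ?_⟩
    rw [mem_lenSet_iff P hP]
    constructor
    · intro i hi
      exact (Finset.mem_filter.mp (Finset.mem_inter.mp hi).1).2
    · refine le_trans (le_of_eq (congrArg Finset.card ?_)) hx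
      ext i
      simp [Finset.mem_sdiff, Finset.mem_filter]
  
lemma mem_stbox_iff (hP : ∀ i b, P i {b} = 1 / 2) (I₁ I₂ : Finset (Fin n))
    (x : Fin n → Bool) :
    x ∈ stbox P {y | ∀ i ∈ I₁, y i = true} {y | ∀ i ∈ I₂, y i = false} (1/2) (1/2)
      ↔ (I₁.filter fun i => x i ≠ true).card ≤ 1
        ∧ (I₂.filter fun i => x i ≠ false).card ≤ 1 := by
  constructor
  · rintro ⟨K, L, hd, hK, hL⟩
    rw [mem_lenSet_iff P hP] at hK hL
    constructor
    · refine le_trans (Finset.card_le_card ?_) hK.2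
      intro i hi
      simp only [Finset.mem_filter] at hi
      refine Finset.mem_sdiff.mpr ⟨hi.1, fun hiK => ?_⟩
      exact hi.2 (hK.1 i (Finset.mem_inter.mpr ⟨hiK, hi.1⟩))
    · refine le_trans (Finset.card_le_card ?_) hL.2
      intro i hi
      simp only [Finset.mem_filter] at hi
      refine Finset.mem_sdiff.mpr ⟨hi.1, fun hiL => ?_⟩
      exact hi.2 (hL.1 i (Finset.mem_inter.mpr ⟨hiL, hi.1⟩))
  · rintro ⟨h1, h2⟩
    refine ⟨Finset.univ.filter (fun i => x i = true),
      Finset.univ.filter (fun i => x i = false), ?_, ?_, ?_⟩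
    · refine Finset.disjoint_left.mpr fun i hi hi' => ?_
      simp only [Finset.mem_filter] at hi hi'
      rw [hi.2] at hi'
      exact absurd hi'.2 (by simp)
    · rw [mem_lenSet_iff P hP]
      refine ⟨fun i hi => (Finset.mem_filter.mp (Finset.mem_inter.mp hi).1).2, ?_⟩
      refine le_trans (le_of_eq (congrArg Finset.card ?_)) h1
      ext i
      simp [Finset.mem_sdiff, Finset.mem_filter]
    · rw [mem_lenSet_iff P hP]
      refine ⟨fun i hi => (Finset.mem_filter.mp (Finset.mem_inter.mp hi).1).2, ?_⟩
      refine le_trans (le_of_eq (congrArg Finset.card ?_)) h2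
      ext i
      simp [Finset.mem_sdiff, Finset.mem_filter]

lemma atmost_eq_iUnion (I : Finset (Fin n)) (b : Bool) :
    {x : Fin n → Bool | (I.filter fun i => x i ≠ b).card ≤ 1}
      = ⋃ a : Option {i : Fin n // i ∈ I}, Cyl I (fun i =>
          match a with
          | none => b
          | some j => if i = j.1 then !b else b) := by
  ext x
  simp only [Set.mem_setOf_eq, Set.mem_iUnion]
  constructor
  · intro hx
    rcases Nat.le_one_iff_eq_zero_or_eq_one.mp hx with h0 | h1
    · refine ⟨none, fun i hi => ?_⟩
      have := Finset.filter_eq_empty_iff.mp (Finset.card_eq_zero.mp h0) hi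
      simpa using this
    · obtain ⟨i₀, hi₀⟩ := Finset.card_eq_one.mp h1
      have hmem : i₀ ∈ I.filter fun i => x i ≠ b := hi₀ ▸ Finset.mem_singleton_self i₀
      have hi₀I : i₀ ∈ I := (Finset.mem_filter.mp hmem).1
      refine ⟨some ⟨i₀, hi₀I⟩, fun i hi => ?_⟩
      show x i = if i = i₀ then !b else b
      by_cases hii : i = i₀
      · subst hii
        have : x i ≠ b := (Finset.mem_filter.mp hmem).2
        simp only [if_pos rfl]
        cases b <;> revert this <;> cases x i <;> simp
      · rw [if_neg hii]
        by_contra hxi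
        have : i ∈ I.filter fun i => x i ≠ b := Finset.mem_filter.mpr ⟨hi, hxi⟩
        rw [hi₀] at this
        exact hii (Finset.mem_singleton.mp this)
  · rintro ⟨a, ha⟩
    match a with
    | none =>
      have : I.filter (fun i => x i ≠ b) = ∅ := by
        refine Finset.filter_eq_empty_iff.mpr fun i hi => ?_
        simp [ha i hi]
      simp [this]
    | some j =>
      refine le_trans (Finset.card_le_card (t := {j.1}) fun i hi => ?_) (by simp)
      rcases Finset.mem_filter.mp hi with ⟨hiI, hxi⟩
      have : x i = if i = j.1 then !b else b := ha i hiI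
      by_contra hij
      rw [if_neg (fun h => hij (Finset.mem_singleton.mpr h))] at this
      exact hxi this

lemma measure_atmost (hP : ∀ i b, P i {b} = 1 / 2) (I : Finset (Fin n)) (b : Bool) :
    Measure.pi P {x : Fin n → Bool | (I.filter fun i => x i ≠ b).card ≤ 1}
      = ((I.card : ℝ≥0∞) + 1) * (1/2) ^ I.card := by
  rw [atmost_eq_iUnion]
  rw [measure_iUnion_cyl P hP]
  · congr 1
    rw [Fintype.card_option, Fintype.card_coe]
    push_cast
    ring
  · rintro (_ | j) (_ | j') hab
    · rfl
    · exfalso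
      have : b = if j'.1 = j'.1 then !b else b := hab j'.1 j'.2
      simp at this
    · exfalso
      have : (if j.1 = j.1 then !b else b) = b := hab j.1 j.2
      simp at this
    · have : (if j.1 = j.1 then !b else b) = if j.1 = j'.1 then !b else b := hab j.1 j.2
      rw [if_pos rfl] at this
      by_cases hjj : j.1 = j'.1
      · exact congrArg _ (Subtype.ext hjj)
      · rw [if_neg hjj] at this
        exact absurd this (Bool.not_ne_self b)

section Spec
variable (m : ℕ)

def IA : Finset (Fin (2*m+1)) := Finset.univ.filter (fun i => (i : ℕ) ≤ m)
def IB : Finset (Fin (2*m+1)) := Finset.univ.filter (fun i => m ≤ (i : ℕ))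

def fA (j : Fin (m+1)) : Fin (2*m+1) := ⟨(j:ℕ), by omega⟩
def fB (j : Fin (m+1)) : Fin (2*m+1) := ⟨m + (j:ℕ), by omega⟩

lemma fA_inj : Function.Injective (fA m) := fun a b hab => by
  have h2 := congrArg Fin.val hab
  simp only [fA] at h2
  exact Fin.ext h2

lemma fB_inj : Function.Injective (fB m) := fun a b hab => by
  have h2 := congrArg Fin.val hab
  simp only [fB] at h2
  exact Fin.ext (by omega)

lemma card_IA : (IA m).card = m + 1 := by
  have h : IA m = Finset.map ⟨fA m, fA_inj m⟩ Finset.univ := by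
    ext i
    simp only [IA, Finset.mem_filter, Finset.mem_univ, true_and, Finset.mem_map,
      Function.Embedding.coeFn_mk]
    constructor
    · intro hi
      exact ⟨⟨(i : ℕ), by omega⟩, by simp [fA, Fin.ext_iff]⟩
    · rintro ⟨j, rfl⟩
      exact Nat.lt_succ_iff.mp j.isLt
  rw [h, Finset.card_map, Finset.card_univ, Fintype.card_fin]

lemma card_IB : (IB m).card = m + 1 := by
  have h : IB m = Finset.map ⟨fB m, fB_inj m⟩ Finset.univ := by
    ext i
    simp only [IB, Finset.mem_filter, Finset.mem_univ, true_and, Finset.mem_map,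
      Function.Embedding.coeFn_mk]
    constructor
    · intro hi
      exact ⟨⟨(i : ℕ) - m, by omega⟩, by simp [fB, Fin.ext_iff]; omega⟩
    · rintro ⟨j, rfl⟩
      simp [fB]
  rw [h, Finset.card_map, Finset.card_univ, Fintype.card_fin]

def g : Bool × Fin (m+1) → Fin (2*m+1) → Bool := fun a i =>
  match a with
  | (true, j) => decide ((i:ℕ) ≤ m ∧ ((i:ℕ) ≠ (j:ℕ) ∨ (j:ℕ) = m))
  | (false, j) => decide ((i:ℕ) < m ∨ ((i:ℕ) = m + (j:ℕ) ∧ (j:ℕ) ≠ 0))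

lemma g_true (j : Fin (m+1)) (i : Fin (2*m+1)) :
    g m (true, j) i = decide ((i:ℕ) ≤ m ∧ ((i:ℕ) ≠ (j:ℕ) ∨ (j:ℕ) = m)) := rfl

lemma g_false (j : Fin (m+1)) (i : Fin (2*m+1)) :
    g m (false, j) i = decide ((i:ℕ) < m ∨ ((i:ℕ) = m + (j:ℕ) ∧ (j:ℕ) ≠ 0)) := rfl

lemma g_inj : ∀ a b : Bool × Fin (m+1),
    (∀ i ∈ (Finset.univ : Finset (Fin (2*m+1))), g m a i = g m b i) → a = b := by
  rintro ⟨c, j⟩ ⟨c', j'⟩ hab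
  have hj := j.isLt
  have hj' := j'.isLt
  have hc : c = c' := by
    have hmc := hab ⟨m, by omega⟩ (Finset.mem_univ _)
    cases c <;> cases c' <;> [skip; skip; skip; rfl]
    · rfl
    · exfalso
      rw [show g m (false, j) ⟨m, by omega⟩
            = decide ((m:ℕ) < m ∨ ((m:ℕ) = m + (j:ℕ) ∧ (j:ℕ) ≠ 0)) from rfl,
          show g m (true, j') ⟨m, by omega⟩
            = decide ((m:ℕ) ≤ m ∧ ((m:ℕ) ≠ (j':ℕ) ∨ (j':ℕ) = m)) from rfl,
          decide_eq_decide] at hmc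
      omega
    · exfalso
      rw [show g m (true, j) ⟨m, by omega⟩
            = decide ((m:ℕ) ≤ m ∧ ((m:ℕ) ≠ (j:ℕ) ∨ (j:ℕ) = m)) from rfl,
          show g m (false, j') ⟨m, by omega⟩
            = decide ((m:ℕ) < m ∨ ((m:ℕ) = m + (j':ℕ) ∧ (j':ℕ) ≠ 0)) from rfl,
          decide_eq_decide] at hmc
      omega
  subst hc
  have hjj : (j : ℕ) = (j' : ℕ) := by
    cases c
    · have h1 := hab ⟨m + (j:ℕ), by omega⟩ (Finset.mem_univ _)
      have h2 := hab ⟨m + (j':ℕ), by omega⟩ (Finset.mem_univ _)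
      rw [show ∀ h, g m (false, j) ⟨m + (j:ℕ), h⟩
            = decide (m + (j:ℕ) < m ∨ (m + (j:ℕ) = m + (j:ℕ) ∧ (j:ℕ) ≠ 0)) from fun _ => rfl,
          show ∀ h, g m (false, j') ⟨m + (j:ℕ), h⟩
            = decide (m + (j:ℕ) < m ∨ (m + (j:ℕ) = m + (j':ℕ) ∧ (j':ℕ) ≠ 0)) from fun _ => rfl,
          decide_eq_decide] at h1
      rw [show ∀ h, g m (false, j) ⟨m + (j':ℕ), h⟩
            = decide (m + (j':ℕ) < m ∨ (m + (j':ℕ) = m + (j:ℕ) ∧ (j:ℕ) ≠ 0)) from fun _ => rfl,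
          show ∀ h, g m (false, j') ⟨m + (j':ℕ), h⟩
            = decide (m + (j':ℕ) < m ∨ (m + (j':ℕ) = m + (j':ℕ) ∧ (j':ℕ) ≠ 0)) from fun _ => rfl,
          decide_eq_decide] at h2
      omega
    · have h1 := hab ⟨(j:ℕ), by omega⟩ (Finset.mem_univ _)
      have h2 := hab ⟨(j':ℕ), by omega⟩ (Finset.mem_univ _)
      rw [show ∀ h, g m (true, j) ⟨(j:ℕ), h⟩
            = decide ((j:ℕ) ≤ m ∧ ((j:ℕ) ≠ (j:ℕ) ∨ (j:ℕ) = m)) from fun _ => rfl,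
          show ∀ h, g m (true, j') ⟨(j:ℕ), h⟩
            = decide ((j:ℕ) ≤ m ∧ ((j:ℕ) ≠ (j':ℕ) ∨ (j':ℕ) = m)) from fun _ => rfl,
          decide_eq_decide] at h1
      rw [show ∀ h, g m (true, j) ⟨(j':ℕ), h⟩
            = decide ((j':ℕ) ≤ m ∧ ((j':ℕ) ≠ (j:ℕ) ∨ (j:ℕ) = m)) from fun _ => rfl,
          show ∀ h, g m (true, j') ⟨(j':ℕ), h⟩
            = decide ((j':ℕ) ≤ m ∧ ((j':ℕ) ≠ (j':ℕ) ∨ (j':ℕ) = m)) from fun _ => rfl,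
          decide_eq_decide] at h2
      omega
  exact Prod.ext rfl (Fin.ext hjj)

lemma stbox_set_eq :
    {x : Fin (2*m+1) → Bool | ((IA m).filter fun i => x i ≠ true).card ≤ 1
        ∧ ((IB m).filter fun i => x i ≠ false).card ≤ 1}
      = ⋃ a : Bool × Fin (m+1), Cyl Finset.univ (g m a) := by
  have hA : ∀ x : Fin (2*m+1) → Bool, ∀ i,
      (i ∈ (IA m).filter fun i => x i ≠ true) ↔ ((i:ℕ) ≤ m ∧ x i = false) := by
    intro x i; simp [IA]
  have hB : ∀ x : Fin (2*m+1) → Bool, ∀ i,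
      (i ∈ (IB m).filter fun i => x i ≠ false) ↔ (m ≤ (i:ℕ) ∧ x i = true) := by
    intro x i; simp [IB]
  ext x
  simp only [Set.mem_setOf_eq, Set.mem_iUnion]
  constructor
  · rintro ⟨h1, h2⟩
    cases hxm : x ⟨m, by omega⟩
    · -- x m = false : badA = {mc}
      have hmcA : (⟨m, by omega⟩ : Fin (2*m+1)) ∈ (IA m).filter fun i => x i ≠ true :=
        (hA x _).mpr ⟨le_refl m, hxm⟩
      have htrue : ∀ i : Fin (2*m+1), (i:ℕ) < m → x i = true := by
        intro i hi
        by_contra hxi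
        have hmem : i ∈ (IA m).filter fun i => x i ≠ true :=
          (hA x i).mpr ⟨by omega, by simpa using hxi⟩
        have h2c : 2 ≤ ((IA m).filter fun i => x i ≠ true).card :=
          Finset.one_lt_card.mpr ⟨i, hmem, _, hmcA, fun hc => by
            rw [hc] at hi; simp at hi⟩
        omega
      rcases Nat.le_one_iff_eq_zero_or_eq_one.mp h2 with hb0 | hb1
      · have hfalse : ∀ i : Fin (2*m+1), m ≤ (i:ℕ) → x i = false := by
          intro i hi
          by_contra hxi
          have hmem : i ∈ (IB m).filter fun i => x i ≠ false :=
            (hB x i).mpr ⟨hi, by simpa using hxi⟩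
          rw [Finset.card_eq_zero.mp hb0] at hmem
          simp at hmem
        refine ⟨(false, ⟨0, by omega⟩), fun i _ => ?_⟩
        rw [show g m (false, ⟨0, by omega⟩) i
          = decide ((i:ℕ) < m ∨ ((i:ℕ) = m + 0 ∧ (0:ℕ) ≠ 0)) from rfl]
        rcases Nat.lt_or_ge (i:ℕ) m with hi | hi
        · rw [htrue i hi, eq_comm, decide_eq_true_eq]
          omega
        · rw [hfalse i hi, eq_comm, decide_eq_false_iff_not]
          omega
      · obtain ⟨c, hc⟩ := Finset.card_eq_one.mp hb1
        have hcmem : c ∈ (IB m).filter fun i => x i ≠ false :=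
          hc ▸ Finset.mem_singleton_self c
        have hcB := (hB x c).mp hcmem
        have hcm : (c:ℕ) ≠ m := by
          intro h
          have he : c = ⟨m, by omega⟩ := Fin.ext h
          rw [he, hxm] at hcB
          simp at hcB
        have hci := c.isLt
        have hfalse : ∀ i : Fin (2*m+1), m ≤ (i:ℕ) → i ≠ c → x i = false := by
          intro i hi hne
          by_contra hxi
          have hmem : i ∈ (IB m).filter fun i => x i ≠ false :=
            (hB x i).mpr ⟨hi, by simpa using hxi⟩
          rw [hc, Finset.mem_singleton] at hmem
          exact hne hmem
        refine ⟨(false, ⟨(c:ℕ) - m, by omega⟩), fun i _ => ?_⟩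
        rw [show g m (false, ⟨(c:ℕ) - m, by omega⟩) i
          = decide ((i:ℕ) < m ∨ ((i:ℕ) = m + ((c:ℕ) - m) ∧ ((c:ℕ) - m) ≠ 0)) from rfl]
        rcases Nat.lt_or_ge (i:ℕ) m with hi | hi
        · rw [htrue i hi, eq_comm, decide_eq_true_eq]
          omega
        · by_cases hic : i = c
          · simp only [hic]
            rw [hcB.2, eq_comm, decide_eq_true_eq]
            omega
          · rw [hfalse i hi hic, eq_comm, decide_eq_false_iff_not]
            have hvne : (i:ℕ) ≠ (c:ℕ) := fun h => hic (Fin.ext h)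
            omega
    · -- x m = true : badB = {mc}
      have hmcB : (⟨m, by omega⟩ : Fin (2*m+1)) ∈ (IB m).filter fun i => x i ≠ false :=
        (hB x _).mpr ⟨le_refl m, hxm⟩
      have hfalse : ∀ i : Fin (2*m+1), m < (i:ℕ) → x i = false := by
        intro i hi
        by_contra hxi
        have hmem : i ∈ (IB m).filter fun i => x i ≠ false :=
          (hB x i).mpr ⟨by omega, by simpa using hxi⟩
        have h2c : 2 ≤ ((IB m).filter fun i => x i ≠ false).card :=
          Finset.one_lt_card.mpr ⟨i, hmem, _, hmcB, fun hcq => by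
            rw [hcq] at hi; simp at hi⟩
        omega
      rcases Nat.le_one_iff_eq_zero_or_eq_one.mp h1 with ha0 | ha1
      · have htrue : ∀ i : Fin (2*m+1), (i:ℕ) ≤ m → x i = true := by
          intro i hi
          by_contra hxi
          have hmem : i ∈ (IA m).filter fun i => x i ≠ true :=
            (hA x i).mpr ⟨hi, by simpa using hxi⟩
          rw [Finset.card_eq_zero.mp ha0] at hmem
          simp at hmem
        refine ⟨(true, ⟨m, by omega⟩), fun i _ => ?_⟩
        rw [show g m (true, ⟨m, by omega⟩) i
          = decide ((i:ℕ) ≤ m ∧ ((i:ℕ) ≠ m ∨ m = m)) from rfl]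
        rcases le_or_gt (i:ℕ) m with hi | hi
        · rw [htrue i hi, eq_comm, decide_eq_true_eq]
          omega
        · rw [hfalse i hi, eq_comm, decide_eq_false_iff_not]
          omega
      · obtain ⟨c, hc⟩ := Finset.card_eq_one.mp ha1
        have hcmem : c ∈ (IA m).filter fun i => x i ≠ true :=
          hc ▸ Finset.mem_singleton_self c
        have hcA := (hA x c).mp hcmem
        have hcm : (c:ℕ) ≠ m := by
          intro h
          have he : c = ⟨m, by omega⟩ := Fin.ext h
          rw [he, hxm] at hcA
          simp at hcA
        have htrue : ∀ i : Fin (2*m+1), (i:ℕ) ≤ m → i ≠ c → x i = true := by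
          intro i hi hne
          by_contra hxi
          have hmem : i ∈ (IA m).filter fun i => x i ≠ true :=
            (hA x i).mpr ⟨hi, by simpa using hxi⟩
          rw [hc, Finset.mem_singleton] at hmem
          exact hne hmem
        refine ⟨(true, ⟨(c:ℕ), by omega⟩), fun i _ => ?_⟩
        rw [show g m (true, ⟨(c:ℕ), by omega⟩) i
          = decide ((i:ℕ) ≤ m ∧ ((i:ℕ) ≠ (c:ℕ) ∨ (c:ℕ) = m)) from rfl]
        rcases le_or_gt (i:ℕ) m with hi | hi
        · by_cases hic : i = c
          · simp only [hic]
            rw [hcA.2, eq_comm, decide_eq_false_iff_not]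
            omega
          · rw [htrue i hi hic, eq_comm, decide_eq_true_eq]
            have hvne : (i:ℕ) ≠ (c:ℕ) := fun h => hic (Fin.ext h)
            omega
        · rw [hfalse i hi, eq_comm, decide_eq_false_iff_not]
          omega
  · rintro ⟨a, ha⟩
    obtain ⟨c, j⟩ := a
    have hj := j.isLt
    have hxg : ∀ i, x i = g m (c, j) i := fun i => ha i (Finset.mem_univ _)
    cases c
    · constructor
      · refine le_trans (Finset.card_le_card
          (t := {(⟨m, by omega⟩ : Fin (2*m+1))}) fun i hi => ?_) (by simp)
        rw [hA, hxg i, g_false] at hi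
        obtain ⟨hi1, hi2⟩ := hi
        rw [decide_eq_false_iff_not] at hi2
        rw [Finset.mem_singleton]
        exact Fin.ext (show (i:ℕ) = m by omega)
      · refine le_trans (Finset.card_le_card
          (t := {(⟨m + (j:ℕ), by omega⟩ : Fin (2*m+1))}) fun i hi => ?_) (by simp)
        rw [hB, hxg i, g_false] at hi
        obtain ⟨hi1, hi2⟩ := hi
        rw [decide_eq_true_eq] at hi2
        rw [Finset.mem_singleton]
        exact Fin.ext (show (i:ℕ) = m + (j:ℕ) by omega)
    · constructor
      · refine le_trans (Finset.card_le_card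
          (t := {(⟨(j:ℕ), by omega⟩ : Fin (2*m+1))}) fun i hi => ?_) (by simp)
        rw [hA, hxg i, g_true] at hi
        obtain ⟨hi1, hi2⟩ := hi
        rw [decide_eq_false_iff_not] at hi2
        rw [Finset.mem_singleton]
        exact Fin.ext (show (i:ℕ) = (j:ℕ) by omega)
      · refine le_trans (Finset.card_le_card
          (t := {(⟨m, by omega⟩ : Fin (2*m+1))}) fun i hi => ?_) (by simp)
        rw [hB, hxg i, g_true] at hi
        obtain ⟨hi1, hi2⟩ := hi
        rw [decide_eq_true_eq] at hi2
        rw [Finset.mem_singleton]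
        exact Fin.ext (show (i:ℕ) = m by omega)

end Spec

lemma four_half_sq : (4:ℝ≥0∞) * (1/2)^2 = 1 := by
  rw [one_div, ← ENNReal.inv_pow, show ((2:ℝ≥0∞)^2) = 4 by norm_num]
  rw [ENNReal.mul_inv_cancel] <;> norm_num

lemma half_pow_shift (m : ℕ) : (1/2:ℝ≥0∞)^(2*m) = 4 * (1/2)^(2*m+2) := by
  rw [pow_add, show (4:ℝ≥0∞) * ((1/2)^(2*m) * (1/2)^2)
    = (1/2)^(2*m) * (4 * (1/2)^2) by ring, four_half_sq, mul_one]

lemma arith1 (m : ℕ) : ((2 * (m + 1) : ℕ) : ℝ≥0∞) * (1/2) ^ (2*m+1)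
    = ((m : ℝ≥0∞) + 1) * (1/2) ^ (2*m) := by
  have h2 : ((2:ℝ≥0∞)) * (1/2) = 1 := by
    rw [one_div, ENNReal.mul_inv_cancel] <;> norm_num
  push_cast
  rw [pow_succ, show (2 * ((m:ℝ≥0∞) + 1)) * ((1/2)^(2*m) * (1/2))
    = (2 * (1/2)) * (((m:ℝ≥0∞) + 1) * (1/2)^(2*m)) by ring, h2, one_mul]

lemma arith2 (m : ℕ) : (((m+1 : ℕ) : ℝ≥0∞) + 1) * (1/2) ^ (m+1)
    = ((m : ℝ≥0∞) + 2) * (1/2) ^ (m+1) := by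
  push_cast
  ring

lemma arith3 (m : ℕ) : ((m : ℝ≥0∞) + 1) * (1/2) ^ (2*m)
    ≤ (((m : ℝ≥0∞) + 2) * (1/2) ^ (m+1)) * (((m : ℝ≥0∞) + 2) * (1/2) ^ (m+1)) := by
  have hrhs : (((m : ℝ≥0∞) + 2) * (1/2) ^ (m+1)) * (((m : ℝ≥0∞) + 2) * (1/2) ^ (m+1))
      = (((m : ℝ≥0∞) + 2) * ((m : ℝ≥0∞) + 2)) * (1/2)^(2*m+2) := by
    rw [show 2*m+2 = (m+1) + (m+1) by ring, pow_add]
    ring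
  have hlhs : ((m : ℝ≥0∞) + 1) * (1/2) ^ (2*m)
      = (4 * ((m : ℝ≥0∞) + 1)) * (1/2)^(2*m+2) := by
    rw [half_pow_shift m]
    ring
  rw [hlhs, hrhs]
  refine mul_le_mul_left ?_ _
  have hn : (4 * (m+1) : ℕ) ≤ ((m+2) * (m+2) : ℕ) := by nlinarith
  calc (4:ℝ≥0∞) * ((m:ℝ≥0∞)+1) = ((4 * (m+1) : ℕ) : ℝ≥0∞) := by push_cast; ring
  _ ≤ (((m+2) * (m+2) : ℕ) : ℝ≥0∞) := by exact_mod_cast hn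
  _ = ((m:ℝ≥0∞)+2) * ((m:ℝ≥0∞)+2) := by push_cast; ring

end Aux

theorem stmt18 (m : ℕ) (hm : 1 ≤ m)
    (P : Fin (2 * m + 1) → Measure Bool) [∀ i, IsProbabilityMeasure (P i)]
    (hP : ∀ i b, P i {b} = 1 / 2) :
    Measure.pi P (stbox P (headsA m) (tailsB m) (1 / 2) (1 / 2))
        = (m + 1) * (1 / 2) ^ (2 * m) ∧
    Measure.pi P (infl P (headsA m) (1 / 2)) = (m + 2) * (1 / 2) ^ (m + 1) ∧
    Measure.pi P (infl P (tailsB m) (1 / 2)) = (m + 2) * (1 / 2) ^ (m + 1) ∧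
    Measure.pi P (stbox P (headsA m) (tailsB m) (1 / 2) (1 / 2))
      ≤ Measure.pi P (infl P (headsA m) (1 / 2))
        * Measure.pi P (infl P (tailsB m) (1 / 2)) := by
  classical
  have hH : headsA m = {y : Fin (2*m+1) → Bool | ∀ i ∈ IA m, y i = true} := by
    ext y
    simp [headsA, IA]
  have hT : tailsB m = {y : Fin (2*m+1) → Bool | ∀ i ∈ IB m, y i = false} := by
    ext y
    simp [tailsB, IB]
  have hinfl1 : Measure.pi P (infl P (headsA m) (1/2)) = ((m:ℝ≥0∞)+2) * (1/2)^(m+1) := by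
    rw [hH]
    have hset : infl P {y : Fin (2*m+1) → Bool | ∀ i ∈ IA m, y i = true} (1/2)
        = {x : Fin (2*m+1) → Bool | ((IA m).filter fun i => x i ≠ true).card ≤ 1} :=
      Set.ext fun x => mem_infl_iff P hP _ _ x
    rw [hset, measure_atmost P hP, card_IA]
    exact arith2 m
  have hinfl2 : Measure.pi P (infl P (tailsB m) (1/2)) = ((m:ℝ≥0∞)+2) * (1/2)^(m+1) := by
    rw [hT]
    have hset : infl P {y : Fin (2*m+1) → Bool | ∀ i ∈ IB m, y i = false} (1/2)
        = {x : Fin (2*m+1) → Bool | ((IB m).filter fun i => x i ≠ false).card ≤ 1} :=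
      Set.ext fun x => mem_infl_iff P hP _ _ x
    rw [hset, measure_atmost P hP, card_IB]
    exact arith2 m
  have hst : Measure.pi P (stbox P (headsA m) (tailsB m) (1/2) (1/2))
      = ((m:ℝ≥0∞)+1) * (1/2)^(2*m) := by
    rw [hH, hT]
    have hset : stbox P {y : Fin (2*m+1) → Bool | ∀ i ∈ IA m, y i = true}
          {y : Fin (2*m+1) → Bool | ∀ i ∈ IB m, y i = false} (1/2) (1/2)
        = ⋃ a : Bool × Fin (m+1), Cyl Finset.univ (g m a) := by
      rw [← stbox_set_eq m]
      exact Set.ext fun x => mem_stbox_iff P hP _ _ x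
    rw [hset, measure_iUnion_cyl P hP _ _ (g_inj m), Finset.card_univ, Fintype.card_fin,
      Fintype.card_prod, Fintype.card_bool, Fintype.card_fin]
    exact arith1 m
  refine ⟨hst, hinfl1, hinfl2, ?_⟩
  rw [hst, hinfl1, hinfl2]
  exact arith3 m
end
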